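/- arXiv:1702.04737 — 2 statements merged into one kernel-verified Lean document; each statement's English description precedes it below -/
import Mathlib

section
/- Let V be a real symmetric 2n×2n matrix with V + iΩ_n ≻ 0, let X be a real 2m×2n matrix of rank 2m (2m ≤ 2n), let Y be a real symmetric 2m×2m matrix with Y + iΩ_m − iXΩ_nXᵀ ⪰ 0, and set V_N := XVXᵀ + Y. Then the Hermitian complex matrix (V − iΩ_n)^{-1} − Xᵀ (V_N − iΩ_m)^{-1} X is positive semidefinite. -/
/-!
Write `A = V - iΩ_n` and `C = Y - iΩ_m + iXΩ_nXᵀ`: they are the complex conjugates of the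
positive definite `V + iΩ_n` and of the positive semidefinite matrix in the hypothesis on `Y`, so
they inherit positivity. Then `V_N - iΩ_m = X A Xᵀ + C`, which is positive definite because `X`
has full row rank. The two Schur complements of the block matrix `[[A⁻¹, Xᵀ], [X, V_N - iΩ_m]]`
are `C` and the matrix of the claim, so one is positive semidefinite iff the other is.
-/

noncomputable section
open Matrix
open scoped ComplexOrder

/-- The standard `2n × 2n` symplectic form matrix `Ω = [[0, I], [-I, 0]]`. -/
def Om (n : ℕ) : Matrix (Fin n ⊕ Fin n) (Fin n ⊕ Fin n) ℝ :=
  Matrix.fromBlocks 0 1 (-1) 0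

/-- Complexification of a real matrix. -/
def cm {k l : Type*} (A : Matrix k l ℝ) : Matrix k l ℂ := A.map Complex.ofReal

namespace Matrix

variable {m n K : Type*} [Fintype m] [Fintype n] [DecidableEq m] [DecidableEq n]

theorem isUnit_of_rank_eq_card [Field K] {A : Matrix n n K} (h : A.rank = Fintype.card n) :
    IsUnit A := by
  have hsurj : Function.Surjective A.mulVecLin := by
    rw [← LinearMap.range_eq_top]
    apply Submodule.eq_top_of_finrank_eq
    rw [Module.finrank_fintype_fun_eq_card, ← h]
    rfl
  rw [← mulVec_injective_iff_isUnit]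
  exact LinearMap.injective_iff_surjective.mpr hsurj

theorem posSemidef_inv_sub_conjTranspose_mul_inv_mul [Field K] [PartialOrder K] [StarRing K]
    [StarOrderedRing K] {A : Matrix n n K} {D : Matrix m m K} (B : Matrix m n K)
    (hA : A.PosDef) (hD : D.PosDef) (h : (D - B * A * Bᴴ).PosSemidef) :
    (A⁻¹ - Bᴴ * D⁻¹ * B).PosSemidef := by
  have := hA.isUnit.invertible
  have := hA.inv.isUnit.invertible
  have := hD.isUnit.invertible
  have hblock : (fromBlocks A⁻¹ Bᴴ Bᴴᴴ D).PosSemidef := by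
    rw [PosDef.fromBlocks₁₁ Bᴴ D hA.inv, inv_inv_of_invertible, conjTranspose_conjTranspose]
    exact h
  simpa only [conjTranspose_conjTranspose] using (PosDef.fromBlocks₂₂ A⁻¹ Bᴴ hD).mp hblock

end Matrix

section Complexification

variable {k l o : Type*}

@[simp]
lemma cm_add (A B : Matrix k l ℝ) : cm (A + B) = cm A + cm B := by
  ext; simp [cm]

@[simp]
lemma cm_sub (A B : Matrix k l ℝ) : cm (A - B) = cm A - cm B := by
  ext; simp [cm]

@[simp]
lemma cm_mul [Fintype l] (A : Matrix k l ℝ) (B : Matrix l o ℝ) : cm (A * B) = cm A * cm B := by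
  ext; simp [cm, mul_apply]

@[simp]
lemma cm_transpose (A : Matrix k l ℝ) : cm Aᵀ = (cm A)ᵀ := by
  ext; simp [cm]

lemma conjTranspose_cm (A : Matrix k l ℝ) : (cm A)ᴴ = (cm A)ᵀ := by
  ext; simp [cm]

lemma conjTranspose_transpose_cm_add_I_smul (A B : Matrix k l ℝ) :
    ((cm A + Complex.I • cm B)ᴴ)ᵀ = cm A - Complex.I • cm B := by
  ext; simp [cm, sub_eq_add_neg]

lemma isUnit_cm [Fintype k] [DecidableEq k] {A : Matrix k k ℝ} (hA : IsUnit A) : IsUnit (cm A) :=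
  hA.map Complex.ofRealHom.mapMatrix

lemma vecMul_cm_injective_of_rank_eq_card [Fintype k] [DecidableEq k] [Fintype l]
    {X : Matrix k l ℝ} (hX : X.rank = Fintype.card k) : Function.Injective (cm X).vecMul := by
  have hXXt : IsUnit (X * Xᵀ) := isUnit_of_rank_eq_card (by rw [rank_self_mul_transpose, hX])
  have := vecMul_injective_of_isUnit (isUnit_cm hXXt)
  rw [cm_mul] at this
  refine Function.Injective.of_comp (f := (· ᵥ* cm Xᵀ)) ?_
  simpa only [Function.comp_def, vecMul_vecMul] using this

lemma posDef_cm_sub_I_smul [Fintype k] {A B : Matrix k k ℝ}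
    (h : (cm A + Complex.I • cm B).PosDef) : (cm A - Complex.I • cm B).PosDef := by
  rw [← conjTranspose_transpose_cm_add_I_smul, h.isHermitian.eq]
  exact h.transpose

lemma posSemidef_cm_sub_I_smul [Fintype k] {A B : Matrix k k ℝ}
    (h : (cm A + Complex.I • cm B).PosSemidef) : (cm A - Complex.I • cm B).PosSemidef := by
  rw [← conjTranspose_transpose_cm_add_I_smul, h.isHermitian.eq]
  exact h.transpose

end Complexification

theorem inverse_difference_posSemidef_general (n m : ℕ)
    (V : Matrix (Fin n ⊕ Fin n) (Fin n ⊕ Fin n) ℝ)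
    (X : Matrix (Fin m ⊕ Fin m) (Fin n ⊕ Fin n) ℝ)
    (Y : Matrix (Fin m ⊕ Fin m) (Fin m ⊕ Fin m) ℝ)
    (hVpd : (cm V + Complex.I • cm (Om n)).PosDef)
    (hXrank : X.rank = 2 * m)
    (hYcp : (cm Y + Complex.I • cm (Om m)
        - Complex.I • (cm X * cm (Om n) * (cm X)ᵀ)).PosSemidef) :
    ((cm V - Complex.I • cm (Om n))⁻¹
      - (cm X)ᵀ * (cm (X * V * Xᵀ + Y) - Complex.I • cm (Om m))⁻¹ * cm X).PosSemidef := by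
  set A := cm V - Complex.I • cm (Om n)
  set C := cm Y - Complex.I • cm (Om m - X * Om n * Xᵀ)
  set D := cm (X * V * Xᵀ + Y) - Complex.I • cm (Om m)
  have hA : A.PosDef := posDef_cm_sub_I_smul hVpd
  have hC : C.PosSemidef := by
    refine posSemidef_cm_sub_I_smul ?_
    convert hYcp using 1
    simp only [cm_sub, cm_mul, cm_transpose, smul_sub]
    abel
  have hD_eq : D = cm X * A * (cm X)ᴴ + C := by
    simp only [D, A, C, conjTranspose_cm, cm_add, cm_sub, cm_mul, cm_transpose, Matrix.mul_sub,
      Matrix.sub_mul, Matrix.mul_smul, Matrix.smul_mul, smul_sub]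
    abel
  have hXinj : Function.Injective (cm X).vecMul :=
    vecMul_cm_injective_of_rank_eq_card (by simpa [two_mul] using hXrank)
  have hD : D.PosDef := by
    rw [hD_eq]
    exact (hA.mul_mul_conjTranspose_same hXinj).add_posSemidef hC
  rw [← conjTranspose_cm]
  exact posSemidef_inv_sub_conjTranspose_mul_inv_mul (cm X) hA hD
    (by rwa [hD_eq, add_sub_cancel_left])

/-- For a faithful covariance matrix `V` (i.e., `V + iΩ_n ≻ 0`), a full-rank channel matrix `X`,
and `Y` symmetric with `Y + iΩ_m - iXΩ_nXᵀ ⪰ 0`, setting `V_N := XVXᵀ + Y`, the Hermitian matrix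
`(V - iΩ_n)⁻¹ - Xᵀ (V_N - iΩ_m)⁻¹ X` is positive semidefinite. -/
theorem inverse_difference_posSemidef (n m : ℕ) (hmn : m ≤ n)
    (V : Matrix (Fin n ⊕ Fin n) (Fin n ⊕ Fin n) ℝ)
    (X : Matrix (Fin m ⊕ Fin m) (Fin n ⊕ Fin n) ℝ)
    (Y : Matrix (Fin m ⊕ Fin m) (Fin m ⊕ Fin m) ℝ)
    (hV : V.IsSymm)
    (hVpd : (cm V + Complex.I • cm (Om n)).PosDef)
    (hXrank : X.rank = 2 * m)
    (hY : Y.IsSymm)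
    (hYcp : (cm Y + Complex.I • cm (Om m)
        - Complex.I • (cm X * cm (Om n) * (cm X)ᵀ)).PosSemidef) :
    ((cm V - Complex.I • cm (Om n))⁻¹
      - (cm X)ᵀ * (cm (X * V * Xᵀ + Y) - Complex.I • cm (Om m))⁻¹ * cm X).PosSemidef :=
  inverse_difference_posSemidef_general n m V X Y hVpd hXrank hYcp
end
end

section
/- Let V be a real symmetric 2n×2n matrix with V + iΩ ≻ 0, let M be a principal square-root matrix for V, and set U := (M + I)V. Then U is invertible and Ωᵀ U^{-1} Ω = (I − M)V; in particular U + Ωᵀ U^{-1} Ω = 2V and U − Ωᵀ U^{-1} Ω = 2MV. -/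
noncomputable section
open Matrix
open scoped ComplexOrder

theorem Om_mul_Om (n : ℕ) : Om n * Om n = -1 := by
  have : (-1 : Matrix (Fin n ⊕ Fin n) (Fin n ⊕ Fin n) ℝ) = Matrix.fromBlocks (-1) 0 0 (-1) := by
    rw [← Matrix.fromBlocks_one, Matrix.fromBlocks_neg]; norm_num
  rw [this]
  simp [Om, Matrix.fromBlocks_multiply]

theorem Om_transpose (n : ℕ) : (Om n)ᵀ = - Om n := by
  rw [Om, Matrix.fromBlocks_transpose, Matrix.fromBlocks_neg]
  norm_num



/-- If `V` is real symmetric with `V + iΩ ≻ 0`, `M` is a principal square-root matrix for `V`,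
and `U := (M + I)V`, then `U` is invertible with `Ωᵀ U⁻¹ Ω = (I - M)V`; in particular
`U + Ωᵀ U⁻¹ Ω = 2V` and `U - Ωᵀ U⁻¹ Ω = 2MV`. -/
theorem sqrt_covariance_inverse_relations (n : ℕ)
    (V M : Matrix (Fin n ⊕ Fin n) (Fin n ⊕ Fin n) ℝ)
    (hV : V.IsSymm)
    (hVpd : (cm V + Complex.I • cm (Om n)).PosDef)
    (hM2 : M * M = 1 + ((V * Om n)⁻¹) ^ 2)
    (hMcomm : M * (V * Om n) = (V * Om n) * M)
    (hMeig : ∀ μ : ℂ, (cm M).charpoly.IsRoot μ → μ.im = 0 ∧ 0 < μ.re)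
    (U : Matrix (Fin n ⊕ Fin n) (Fin n ⊕ Fin n) ℝ)
    (hU : U = (M + 1) * V) :
    IsUnit U.det
      ∧ (Om n)ᵀ * U⁻¹ * Om n = (1 - M) * V
      ∧ U + (Om n)ᵀ * U⁻¹ * Om n = (2 : ℝ) • V
      ∧ U - (Om n)ᵀ * U⁻¹ * Om n = (2 : ℝ) • (M * V) := by
  -- transpose of the complexified matrix
  have htr : (cm V + Complex.I • cm (Om n))ᵀ = cm V - Complex.I • cm (Om n) := by
    rw [Matrix.transpose_add, Matrix.transpose_smul]
    have h1 : (cm V)ᵀ = cm V := by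
      rw [cm, ← Matrix.transpose_map]
      rw [show Vᵀ = V from hV]
    have h2 : (cm (Om n))ᵀ = - cm (Om n) := by
      rw [cm, ← Matrix.transpose_map, Om_transpose]
      ext i j
      simp
    rw [h1, h2, smul_neg]
    abel
  have hsum : (cm V + Complex.I • cm (Om n)) + (cm V + Complex.I • cm (Om n))ᵀ
      = (2 : ℂ) • cm V := by
    rw [htr, two_smul]; abel
  have h2Vpd : ((2 : ℂ) • cm V).PosDef := by
    rw [← hsum]; exact hVpd.add hVpd.transpose
  -- det V ≠ 0
  have hdetV : IsUnit V.det := by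
    have hdet : ((2 : ℂ) • cm V).det ≠ 0 := ne_of_gt h2Vpd.det_pos
    rw [Matrix.det_smul] at hdet
    have hcmdet : (cm V).det ≠ 0 := by
      intro h; rw [h, mul_zero] at hdet; exact hdet rfl
    have : ((V.det : ℝ) : ℂ) = (cm V).det := by
      rw [cm]; exact RingHom.map_det Complex.ofRealHom V
    apply isUnit_iff_ne_zero.mpr
    intro h
    rw [h] at this
    exact hcmdet (by simpa using this.symm)
  -- A = V * Om n is invertible
  set A := V * Om n with hA
  have hdetOm : IsUnit (Om n).det := by
    apply Matrix.isUnit_det_of_right_inverse (B := -(Om n))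
    rw [Matrix.mul_neg, Om_mul_Om]; simp
  have hdetA : IsUnit A.det := by
    rw [hA, Matrix.det_mul]; exact hdetV.mul hdetOm
  have hAinv : A⁻¹ * A = 1 := Matrix.nonsing_inv_mul A hdetA
  -- key computation
  have hVOmT : V * (Om n)ᵀ = -A := by rw [Om_transpose, Matrix.mul_neg, hA]
  have hcomm' : (1 - M) * A = A * (1 - M) := by
    rw [sub_mul, mul_sub, one_mul, mul_one, hMcomm]
  have hkey : U * (Om n * ((1 - M) * V * (Om n)ᵀ)) = 1 := by
    rw [hU]
    calc (M + 1) * V * (Om n * ((1 - M) * V * (Om n)ᵀ))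
        = (M + 1) * (V * Om n) * (1 - M) * (V * (Om n)ᵀ) := by
          simp only [Matrix.mul_assoc]
      _ = (M + 1) * A * (1 - M) * (-A) := by rw [← hA, hVOmT]
      _ = (M + 1) * ((1 - M) * A) * (-A) := by
          rw [Matrix.mul_assoc (M + 1) A (1 - M), hcomm']
      _ = -((M + 1) * (1 - M) * (A * A)) := by
          simp only [Matrix.mul_neg, Matrix.mul_assoc]
      _ = (M * M - 1) * (A * A) := by
          have : (M + 1) * (1 - M) = -(M * M - 1) := by noncomm_ring
          rw [this, Matrix.neg_mul, neg_neg]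
      _ = (A⁻¹ * A⁻¹) * (A * A) := by
          rw [hM2]; congr 1; rw [sq]; abel
      _ = 1 := by
          rw [Matrix.mul_assoc, ← Matrix.mul_assoc A⁻¹ A A, hAinv, Matrix.one_mul, hAinv]
  have hUdet : IsUnit U.det := Matrix.isUnit_det_of_right_inverse hkey
  have hUinv : U⁻¹ = Om n * ((1 - M) * V * (Om n)ᵀ) := Matrix.inv_eq_right_inv hkey
  have hOTO : (Om n)ᵀ * Om n = 1 := by
    rw [Om_transpose, Matrix.neg_mul, Om_mul_Om]; simp
  have hmain : (Om n)ᵀ * U⁻¹ * Om n = (1 - M) * V := by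
    rw [hUinv]
    calc (Om n)ᵀ * (Om n * ((1 - M) * V * (Om n)ᵀ)) * Om n
        = ((Om n)ᵀ * Om n) * ((1 - M) * V) * ((Om n)ᵀ * Om n) := by
          simp only [Matrix.mul_assoc]
      _ = (1 - M) * V := by rw [hOTO]; simp [Matrix.mul_assoc]
  refine ⟨hUdet, hmain, ?_, ?_⟩
  · rw [hmain, hU, ← add_mul]
    have : (M + 1) + (1 - M) = (2 : ℝ) • (1 : Matrix (Fin n ⊕ Fin n) (Fin n ⊕ Fin n) ℝ) := by
      rw [two_smul]; abel
    rw [this, Matrix.smul_mul, Matrix.one_mul]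
  · rw [hmain, hU, ← sub_mul]
    have : (M + 1) - (1 - M) = (2 : ℝ) • M := by rw [two_smul]; abel
    rw [this, Matrix.smul_mul]
end
end
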